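/- arXiv:1905.07355 — 5 statements merged into one kernel-verified Lean document; each statement's English description precedes it below -/
import Mathlib

section
/- Let k ≥ 2 be an integer, Γ ⊆ ℤ^k a finite set, and σ_1,…,σ_k linear orders on ℤ with induced product partial order σ. Then H(Γ_σ) does not lie in the open interval (0, ξ_k); that is, either H(Γ_σ) = 0 or H(Γ_σ) ≥ ξ_k = log(k/(k−1)^{(k−1)/k}). -/
open scoped BigOperators
open Classical

noncomputable section

namespace SlicePaper

/-- Shannon entropy of the `i`-th coordinate marginal of a distribution `p` on `Δ`. -/
def margEnt {ι : Type*} [Fintype ι] (Δ : Finset (ι → ℤ)) (p : (ι → ℤ) → ℝ) (i : ι) : ℝ :=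
  -∑ α ∈ Δ.image (fun γ => γ i),
      (∑ γ ∈ Δ.filter (fun γ => γ i = α), p γ) *
        Real.log (∑ γ ∈ Δ.filter (fun γ => γ i = α), p γ)

/-- The entropy `H(Δ)` of a finite set of integer tuples. -/
def HSet {ι : Type*} [Fintype ι] (Δ : Finset (ι → ℤ)) : ℝ :=
  sSup {e : ℝ | ∃ p : (ι → ℤ) → ℝ, (∀ γ, 0 ≤ p γ) ∧ (∀ γ, p γ ≠ 0 → γ ∈ Δ) ∧
    (∑ γ ∈ Δ, p γ) = 1 ∧ e = ⨅ i, margEnt Δ p i}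

/-- Maximal elements of `Δ` w.r.t. the product of the linear orders `σ i`. -/
def maxElems {ι : Type*} [Fintype ι] (σ : ι → LinearOrder ℤ) (Δ : Finset (ι → ℤ)) :
    Finset (ι → ℤ) :=
  Δ.filter (fun γ => ∀ δ ∈ Δ, (∀ i, (σ i).le (γ i) (δ i)) → γ = δ)

/-- `ξ k = log (k / (k-1)^((k-1)/k))`. -/
def xi (k : ℕ) : ℝ :=
  Real.log ((k : ℝ) / ((k : ℝ) - 1) ^ (((k : ℝ) - 1) / (k : ℝ)))

/-- Slice rank of a coefficient array `c`. -/
def sliceRank {k : ℕ} (F : Type*) [Field F] (τ : Fin k → Type*) [∀ i, Fintype (τ i)]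
    (c : (∀ i, τ i) → F) : ℕ :=
  sInf {r : ℕ | ∃ j : Fin r → Fin k, ∃ a : ∀ l : Fin r, τ (j l) → F,
    ∃ b : ∀ l : Fin r, (((i : {i : Fin k // i ≠ j l}) → τ i.1) → F),
    ∀ s : ∀ i, τ i, c s = ∑ l : Fin r, a l (s (j l)) * b l (fun i => s i.1)}

/-- `n`-th tensor power of a coefficient array. -/
def tpow {k : ℕ} {F : Type*} [Field F] {τ : Fin k → Type*} (c : (∀ i, τ i) → F) (n : ℕ) :
    (∀ i, Fin n → τ i) → F :=
  fun u => ∏ m : Fin n, c (fun i => u i m)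

/-- Support of a coefficient array, as a finite set of integer tuples. -/
def support {k : ℕ} {F : Type*} [Field F] (S : Fin k → Finset ℤ)
    (c : (∀ i, {x : ℤ // x ∈ S i}) → F) : Finset (Fin k → ℤ) :=
  (Finset.univ.filter (fun s : ∀ i, {x : ℤ // x ∈ S i} => c s ≠ 0)).image
    (fun s i => (s i : ℤ))

/-- Section `Γ_I^x`: restrictions to coordinates outside `I` of the γ ∈ Γ agreeing with x on I. -/
def sect {k : ℕ} (Γ : Finset (Fin k → ℤ)) (I : Finset (Fin k)) (x : Fin k → ℤ) :
    Finset ({i : Fin k // i ∉ I} → ℤ) :=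
  (Γ.filter (fun γ => ∀ i ∈ I, γ i = x i)).image (fun γ i => γ i.1)

/-- Section along a single coordinate. -/
def sect1 {k : ℕ} (Γ : Finset (Fin k → ℤ)) (i : Fin k) (a : ℤ) :
    Finset ({j : Fin k // j ≠ i} → ℤ) :=
  (Γ.filter (fun γ => γ i = a)).image (fun γ j => γ j.1)

/-- Trifferent set of strings. -/
def trifferent {n : ℕ} {α : Type*} (A : Finset (Fin n → α)) : Prop :=
  ∀ x ∈ A, ∀ y ∈ A, ∀ z ∈ A, x ≠ y → y ≠ z → x ≠ z →
    ∃ i, x i ≠ y i ∧ y i ≠ z i ∧ x i ≠ z i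

/-- The cube root of unity `ω = e^{2πi/3}`. -/
def w : ℂ := Complex.exp (2 * Real.pi * Complex.I / 3)

/-- The tensor `f_{x,y}(z,t)` used for the trifference problem. -/
def f {n : ℕ} (x y z t : Fin n → ℂ) : ℂ :=
  ∏ i, (x i + y i + z i) * (x i + y i + t i)

/-- Monomial functions `g_{α,β}`. -/
def g {n : ℕ} (α β : Fin n → ℕ) : (Fin n → ℂ) × (Fin n → ℂ) → ℂ :=
  fun q => ∏ i, (q.1 i + q.2 i) ^ α i * (q.1 i * q.2 i) ^ β i

/-!
If `H(Δ) > 0`, some distribution on `Δ` has all marginal entropies positive, so no coordinate is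
constant on `Δ`. A minimal subset `B ⊆ Δ` on which no coordinate is constant has at most `k`
elements: removing any `β ∈ B` makes some coordinate constant on `B \ {β}`, and when `#B ≥ 3`
distinct `β` give distinct coordinates. Under the uniform distribution on `B`, every coordinate
has a fiber of mass `c / #B ∈ [1/k, 1 - 1/k]`. Grouping the other fibers (`negMulLog` is
subadditive), the marginal entropy is at least the binary entropy of that mass, which by
concavity and symmetry is at least `h(1/k) = ξ_k`.
-/

open Real
open scoped Finset

theorem xi_eq_binEntropy {k : ℕ} (hk : 2 ≤ k) : xi k = binEntropy (k : ℝ)⁻¹ := by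
  have hk : (2 : ℝ) ≤ k := mod_cast hk
  have hk1 : (0 : ℝ) < k - 1 := by linarith
  have h1k : 1 - (k : ℝ)⁻¹ = (k - 1) / k := by field_simp
  rw [xi, binEntropy, Real.log_div (by positivity) (by positivity), Real.log_rpow hk1, h1k,
    inv_inv, inv_div, Real.log_div (by positivity) hk1.ne']
  field_simp
  ring

theorem binEntropy_le_of_mem_Icc {a t : ℝ} (ha : 0 ≤ a) (ht : t ∈ Set.Icc a (1 - a)) :
    binEntropy a ≤ binEntropy t := by
  have hmem : ∀ x ∈ Set.Icc a (1 - a), x ∈ Set.Icc (0 : ℝ) 1 := fun x hx =>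
    ⟨ha.trans hx.1, hx.2.trans (by linarith)⟩
  have h := strictConcave_binEntropy.concaveOn.min_le_of_mem_Icc
    (hmem a ⟨le_rfl, ht.1.trans ht.2⟩) (hmem _ ⟨ht.1.trans ht.2, le_rfl⟩) ht
  rwa [binEntropy_one_sub, min_self] at h

theorem negMulLog_add_le {x y : ℝ} (hx : 0 ≤ x) (hy : 0 ≤ y) :
    negMulLog (x + y) ≤ negMulLog x + negMulLog y := by
  rcases hx.eq_or_lt with rfl | hx
  · simp
  rcases hy.eq_or_lt with rfl | hy
  · simp
  have hlx := Real.log_le_log hx (le_add_of_nonneg_right hy.le)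
  have hly := Real.log_le_log hy (le_add_of_nonneg_left hx.le)
  simp only [negMulLog, neg_mul]
  nlinarith

theorem negMulLog_sum_le {β : Type*} (s : Finset β) {q : β → ℝ} (hq : ∀ b ∈ s, 0 ≤ q b) :
    negMulLog (∑ b ∈ s, q b) ≤ ∑ b ∈ s, negMulLog (q b) :=
  Finset.le_sum_of_subadditive_on_pred negMulLog (0 ≤ ·) (by simp)
    (fun _ _ => negMulLog_add_le) (fun _ _ => add_nonneg) q hq

theorem binEntropy_le_sum_negMulLog {β : Type*} {s : Finset β} {q : β → ℝ}
    (hq : ∀ b ∈ s, 0 ≤ q b) (hsum : ∑ b ∈ s, q b = 1) {a : β} (ha : a ∈ s) :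
    binEntropy (q a) ≤ ∑ b ∈ s, negMulLog (q b) := by
  have hrest : ∑ b ∈ s.erase a, q b = 1 - q a := by
    rw [← hsum, ← Finset.sum_erase_add s q ha, add_sub_cancel_right]
  rw [binEntropy_eq_negMulLog_add_negMulLog_one_sub, ← Finset.add_sum_erase s _ ha, ← hrest]
  gcongr
  exact negMulLog_sum_le _ fun b hb => hq b (Finset.mem_of_mem_erase hb)

section Combinatorics

variable {ι α : Type*}

def CoordConstOn (B : Finset (ι → α)) (i : ι) : Prop :=
  ∀ γ ∈ B, ∀ δ ∈ B, γ i = δ i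

theorem CoordConstOn.of_erase_of_erase [DecidableEq (ι → α)] {B : Finset (ι → α)} {i : ι}
    {β β' : ι → α} (h : CoordConstOn (B.erase β) i) (h' : CoordConstOn (B.erase β') i)
    (hne : β ≠ β') (hB : 3 ≤ #B) : CoordConstOn B i := by
  obtain ⟨γ₀, hγ₀⟩ : ((B.erase β).erase β').Nonempty := by
    rw [← Finset.card_pos]
    have := Finset.pred_card_le_card_erase (s := B.erase β) (a := β')
    have := Finset.pred_card_le_card_erase (s := B) (a := β)
    omega
  have hγ₀β' : γ₀ ∈ B.erase β' := by
    simp only [Finset.mem_erase] at hγ₀ ⊢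
    exact ⟨hγ₀.1, hγ₀.2.2⟩
  have hγ₀β : γ₀ ∈ B.erase β := Finset.mem_of_mem_erase hγ₀
  have hconst : ∀ γ ∈ B, γ i = γ₀ i := by
    intro γ hγ
    by_cases hγβ : γ = β
    · exact h' γ (Finset.mem_erase.2 ⟨hγβ ▸ hne, hγ⟩) γ₀ hγ₀β'
    · exact h γ (Finset.mem_erase.2 ⟨hγβ, hγ⟩) γ₀ hγ₀β
  exact fun γ hγ δ hδ => (hconst γ hγ).trans (hconst δ hδ).symm

theorem card_le_of_minimal_nonconst [Fintype ι] {B : Finset (ι → α)}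
    (hB : ∀ i, ¬ CoordConstOn B i) (hmin : ∀ β ∈ B, ∃ i, CoordConstOn (B.erase β) i) :
    #B ≤ max 2 (Fintype.card ι) := by
  by_contra! hbig
  have h3 : 3 ≤ #B := by omega
  choose I hI using hmin
  let J : B → ι := fun β => I β β.2
  have hJ : Function.Injective J := by
    rintro ⟨β, hβ⟩ ⟨β', hβ'⟩ heq
    by_contra hne
    have hne : β ≠ β' := fun h => hne (Subtype.ext h)
    have hI' := hI β' hβ'
    rw [← show I β hβ = I β' hβ' from heq] at hI'
    exact hB _ ((hI β hβ).of_erase_of_erase hI' hne h3)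
  have := Fintype.card_le_of_injective J hJ
  simp only [Fintype.card_coe] at this
  omega

theorem exists_subset_card_le_nonconst [Fintype ι] (Δ : Finset (ι → α))
    (hΔ : ∀ i, ¬ CoordConstOn Δ i) :
    ∃ B ⊆ Δ, #B ≤ max 2 (Fintype.card ι) ∧ ∀ i, ¬ CoordConstOn B i := by
  induction Δ using Finset.strongInduction with
  | H Δ ih =>
    by_cases hmin : ∀ β ∈ Δ, ∃ i, CoordConstOn (Δ.erase β) i
    · exact ⟨Δ, subset_rfl, card_le_of_minimal_nonconst hΔ hmin, hΔ⟩
    · push Not at hmin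
      obtain ⟨β, hβ, hβΔ⟩ := hmin
      obtain ⟨B, hB, hBcard, hBconst⟩ := ih _ (Finset.erase_ssubset hβ) hβΔ
      exact ⟨B, hB.trans (Finset.erase_subset _ _), hBcard, hBconst⟩

end Combinatorics

section Entropy

variable {ι : Type*}

def fiberMass (Δ : Finset (ι → ℤ)) (p : (ι → ℤ) → ℝ) (i : ι) (a : ℤ) : ℝ :=
  ∑ γ ∈ Δ.filter (fun γ => γ i = a), p γ

structure IsDistribOn (Δ : Finset (ι → ℤ)) (p : (ι → ℤ) → ℝ) : Prop where
  nonneg : ∀ γ, 0 ≤ p γ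
  support_subset : ∀ γ, p γ ≠ 0 → γ ∈ Δ
  sum_eq_one : ∑ γ ∈ Δ, p γ = 1

theorem margEnt_eq_sum_negMulLog [Fintype ι] (Δ : Finset (ι → ℤ)) (p : (ι → ℤ) → ℝ) (i : ι) :
    margEnt Δ p i = ∑ a ∈ Δ.image (· i), negMulLog (fiberMass Δ p i a) := by
  simp only [margEnt, fiberMass, negMulLog, neg_mul, Finset.sum_neg_distrib]

theorem sum_fiberMass (Δ : Finset (ι → ℤ)) (p : (ι → ℤ) → ℝ) (i : ι) :
    ∑ a ∈ Δ.image (· i), fiberMass Δ p i a = ∑ γ ∈ Δ, p γ :=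
  Finset.sum_fiberwise_of_maps_to (fun _ hγ => Finset.mem_image_of_mem _ hγ) p

theorem fiberMass_nonneg {Δ : Finset (ι → ℤ)} {p : (ι → ℤ) → ℝ} (hp : ∀ γ, 0 ≤ p γ) (i : ι)
    (a : ℤ) : 0 ≤ fiberMass Δ p i a :=
  Finset.sum_nonneg fun γ _ => hp γ

theorem margEnt_le_card [Fintype ι] {Δ : Finset (ι → ℤ)} {p : (ι → ℤ) → ℝ} (hp : ∀ γ, 0 ≤ p γ)
    (i : ι) :
    margEnt Δ p i ≤ #Δ := by
  rw [margEnt_eq_sum_negMulLog]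
  calc ∑ a ∈ Δ.image (· i), negMulLog (fiberMass Δ p i a)
      ≤ ∑ _a ∈ Δ.image (· i), (1 : ℝ) := by
        gcongr with a
        have hmass := fiberMass_nonneg (Δ := Δ) hp i a
        linarith [negMulLog_le_one_sub_self hmass]
    _ ≤ #Δ := by
        rw [Finset.sum_const, nsmul_one]
        exact_mod_cast Finset.card_image_le

theorem binEntropy_fiberMass_le_margEnt [Fintype ι] {Δ : Finset (ι → ℤ)} {p : (ι → ℤ) → ℝ}
    (hp : IsDistribOn Δ p) (i : ι) {γ : ι → ℤ} (hγ : γ ∈ Δ) :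
    binEntropy (fiberMass Δ p i (γ i)) ≤ margEnt Δ p i := by
  rw [margEnt_eq_sum_negMulLog]
  exact binEntropy_le_sum_negMulLog (fun a _ => fiberMass_nonneg hp.nonneg i a)
    ((sum_fiberMass Δ p i).trans hp.sum_eq_one) (Finset.mem_image_of_mem _ hγ)

theorem margEnt_eq_zero_of_coordConstOn [Fintype ι] {Δ : Finset (ι → ℤ)} {p : (ι → ℤ) → ℝ}
    (hp : IsDistribOn Δ p) {i : ι} (hi : CoordConstOn Δ i) : margEnt Δ p i = 0 := by
  obtain ⟨γ₀, hγ₀⟩ : Δ.Nonempty := Finset.nonempty_of_sum_ne_zero (hp.sum_eq_one ▸ one_ne_zero)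
  have himage : Δ.image (· i) = {γ₀ i} :=
    Finset.eq_singleton_iff_unique_mem.2 ⟨Finset.mem_image_of_mem _ hγ₀, by
      intro a ha
      obtain ⟨γ, hγ, rfl⟩ := Finset.mem_image.1 ha
      exact hi γ hγ γ₀ hγ₀⟩
  have hfiber : fiberMass Δ p i (γ₀ i) = 1 := by
    rw [fiberMass, Finset.filter_true_of_mem fun γ hγ => hi γ hγ γ₀ hγ₀, hp.sum_eq_one]
  rw [margEnt_eq_sum_negMulLog, himage, Finset.sum_singleton, hfiber, negMulLog_one]

theorem iInf_margEnt_le_HSet [Fintype ι] [Nonempty ι] {Δ : Finset (ι → ℤ)} {p : (ι → ℤ) → ℝ}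
    (hp : IsDistribOn Δ p) :
    ⨅ i, margEnt Δ p i ≤ HSet Δ := by
  refine le_csSup ⟨#Δ, ?_⟩ ⟨p, hp.nonneg, hp.support_subset, hp.sum_eq_one, rfl⟩
  rintro _ ⟨q, hq, -, -, rfl⟩
  exact (ciInf_le (Set.finite_range _).bddBelow (Classical.arbitrary ι)).trans
    (margEnt_le_card hq _)

theorem exists_isDistribOn_of_HSet_pos [Fintype ι] {Δ : Finset (ι → ℤ)} (h : 0 < HSet Δ) :
    ∃ p, IsDistribOn Δ p ∧ 0 < ⨅ i, margEnt Δ p i := by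
  by_contra! hnone
  refine h.not_ge (Real.sSup_nonpos fun e => ?_)
  rintro ⟨p, hp₀, hpΔ, hp₁, rfl⟩
  exact hnone p ⟨hp₀, hpΔ, hp₁⟩

def uniformOn (B : Finset (ι → ℤ)) : (ι → ℤ) → ℝ :=
  fun γ => if γ ∈ B then (#B : ℝ)⁻¹ else 0

theorem isDistribOn_uniformOn {B Δ : Finset (ι → ℤ)} (hB : B.Nonempty) (hBΔ : B ⊆ Δ) :
    IsDistribOn Δ (uniformOn B) where
  nonneg γ := by simp only [uniformOn]; split_ifs <;> positivity
  support_subset γ hγ := hBΔ (by_contra fun h => hγ (if_neg h))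
  sum_eq_one := by
    simp only [uniformOn]
    rw [Finset.sum_ite_mem, Finset.inter_eq_right.2 hBΔ, Finset.sum_const,
      nsmul_eq_mul, mul_inv_cancel₀ (by exact_mod_cast hB.card_pos.ne')]

theorem fiberMass_uniformOn {B Δ : Finset (ι → ℤ)} (hBΔ : B ⊆ Δ) (i : ι) (a : ℤ) :
    fiberMass Δ (uniformOn B) i a = #(B.filter (fun γ => γ i = a)) / #B := by
  simp only [fiberMass, uniformOn]
  rw [Finset.sum_ite_mem, Finset.sum_const, nsmul_eq_mul, div_eq_mul_inv,
    Finset.filter_inter, Finset.inter_eq_right.2 hBΔ]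

theorem natCast_div_mem_Icc_inv {c m k : ℕ} (hc : 1 ≤ c) (hcm : c < m) (hmk : m ≤ k) :
    (c : ℝ) / m ∈ Set.Icc (k : ℝ)⁻¹ (1 - (k : ℝ)⁻¹) := by
  have hc : (1 : ℝ) ≤ c := by exact_mod_cast hc
  have hcm : (c : ℝ) ≤ m - 1 := by
    have : (c : ℝ) + 1 ≤ m := by exact_mod_cast hcm
    linarith
  have hmk : (m : ℝ) ≤ k := by exact_mod_cast hmk
  have hm : (0 : ℝ) < m := by linarith
  constructor
  · calc (k : ℝ)⁻¹ ≤ (m : ℝ)⁻¹ := inv_anti₀ hm hmk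
      _ ≤ c / m := by rw [inv_eq_one_div]; gcongr
  · calc (c : ℝ) / m ≤ (m - 1) / m := by gcongr
      _ = 1 - (m : ℝ)⁻¹ := by field_simp
      _ ≤ 1 - (k : ℝ)⁻¹ := by gcongr

theorem binEntropy_inv_le_margEnt_uniformOn [Fintype ι] {k : ℕ} {B Δ : Finset (ι → ℤ)}
    (hBΔ : B ⊆ Δ) (hBk : #B ≤ k) {i : ι} (hi : ¬ CoordConstOn B i) :
    binEntropy (k : ℝ)⁻¹ ≤ margEnt Δ (uniformOn B) i := by
  simp only [CoordConstOn, not_forall] at hi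
  obtain ⟨γ, hγ, δ, hδ, hγδ⟩ := hi
  have hfiber_pos : 1 ≤ #(B.filter (fun β => β i = γ i)) :=
    Finset.card_pos.2 ⟨γ, Finset.mem_filter.2 ⟨hγ, rfl⟩⟩
  have hfiber_lt : #(B.filter (fun β => β i = γ i)) < #B :=
    Finset.card_lt_card <| Finset.filter_ssubset.2 ⟨δ, hδ, fun h => hγδ h.symm⟩
  have hmass := natCast_div_mem_Icc_inv hfiber_pos hfiber_lt hBk
  rw [← fiberMass_uniformOn hBΔ] at hmass
  exact (binEntropy_le_of_mem_Icc (by positivity) hmass).trans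
    (binEntropy_fiberMass_le_margEnt (isDistribOn_uniformOn ⟨γ, hγ⟩ hBΔ) i (hBΔ hγ))

end Entropy

theorem xi_le_HSet {ι : Type*} [Fintype ι] (hι : 2 ≤ Fintype.card ι) {Δ : Finset (ι → ℤ)}
    (hΔ : 0 < HSet Δ) : xi (Fintype.card ι) ≤ HSet Δ := by
  have : Nonempty ι := Fintype.card_pos_iff.1 (by omega)
  obtain ⟨p, hp, hpos⟩ := exists_isDistribOn_of_HSet_pos hΔ
  have hΔconst : ∀ i, ¬ CoordConstOn Δ i := fun i hi => by
    have := (ciInf_le (Set.finite_range _).bddBelow i).trans_lt' hpos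
    rw [margEnt_eq_zero_of_coordConstOn hp hi] at this
    exact this.false
  obtain ⟨B, hBΔ, hBcard, hBconst⟩ := exists_subset_card_le_nonconst Δ hΔconst
  rw [max_eq_right hι] at hBcard
  have hB : B.Nonempty := by
    by_contra! h
    exact hBconst (Classical.arbitrary ι) (by simp [h, CoordConstOn])
  calc xi (Fintype.card ι) = binEntropy (Fintype.card ι : ℝ)⁻¹ := xi_eq_binEntropy hι
    _ ≤ ⨅ i, margEnt Δ (uniformOn B) i :=
      le_ciInf fun i => binEntropy_inv_le_margEnt_uniformOn hBΔ hBcard (hBconst i)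
    _ ≤ HSet Δ := iInf_margEnt_le_HSet (isDistribOn_uniformOn hB hBΔ)

/-- for any finite `Γ ⊆ ℤ^k` and any product of linear orders `σ`,
`H(Γ_σ)` does not lie in the open interval `(0, ξ k)`. -/
theorem stmt1 {k : ℕ} (hk : 2 ≤ k) (Γ : Finset (Fin k → ℤ))
    (σ : Fin k → LinearOrder ℤ) :
    HSet (maxElems σ Γ) ∉ Set.Ioo 0 (xi k) := by
  rintro ⟨hpos, hlt⟩
  have := xi_le_HSet (by rwa [Fintype.card_fin]) hpos
  rw [Fintype.card_fin] at this
  exact hlt.not_ge this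

end SlicePaper
end
end

section
/- Let k ≥ 2 and let Γ = {γ_1,…,γ_k} ⊆ ℤ^k, where γ_j has j-th coordinate equal to 2 and all other coordinates equal to 1. Then Γ is an antichain for the componentwise (standard product) partial order on ℤ^k (so Γ_σ = Γ for the standard product order σ), and H(Γ) = log(k/(k−1)^{(k−1)/k}). -/
open scoped BigOperators
open Classical

noncomputable section

namespace SlicePaper

/-!
Only `γ_i = spike i` has a `2` in coordinate `i`, so under a distribution `p` on `Γ` the `i`-th
marginal is Bernoulli with parameter `p γ_i` and has binary entropy `h(p γ_i)`. Some `p γ_i` is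
at most `1/k ≤ 1/2`, where `h` is increasing, so the minimal marginal entropy is at most
`h(1/k) = ξ k`, and the uniform distribution attains it.
-/

lemma maxElems_eq_self_of_isAntichain {ι : Type*} [Fintype ι] {Δ : Finset (ι → ℤ)}
    (hΔ : IsAntichain (· ≤ ·) (Δ : Set (ι → ℤ))) :
    maxElems (fun _ : ι => (inferInstance : LinearOrder ℤ)) Δ = Δ := by
  unfold maxElems
  ext γ
  simp only [Finset.mem_filter, and_iff_left_iff_imp]
  intro hγ δ hδ hle
  by_contra hne
  exact hΔ hγ hδ hne hle

lemma binEntropy_inv_natCast {n : ℕ} (hn : 2 ≤ n) : Real.binEntropy (n : ℝ)⁻¹ = xi n := by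
  have hn0 : (0 : ℝ) < n := by positivity
  have hn1 : (0 : ℝ) < n - 1 := by
    have : (2 : ℝ) ≤ n := by exact_mod_cast hn
    linarith
  have hsub : 1 - (n : ℝ)⁻¹ = (n - 1) / n := by field_simp
  rw [Real.binEntropy, xi, hsub, Real.log_div (by positivity) (by positivity), Real.log_rpow hn1,
    inv_div, Real.log_div hn0.ne' hn1.ne', inv_inv]
  field_simp
  ring

section Spike

variable {ι : Type*} [DecidableEq ι]

def spike (j : ι) : ι → ℤ := fun i => if i = j then 2 else 1

lemma spike_apply_eq_two_iff {i j : ι} : spike j i = 2 ↔ i = j := by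
  unfold spike; split_ifs <;> simp_all

lemma spike_apply_eq_one_iff {i j : ι} : spike j i = 1 ↔ i ≠ j := by
  unfold spike; split_ifs <;> simp_all

lemma spike_injective : Function.Injective (spike : ι → ι → ℤ) := fun a _ h =>
  spike_apply_eq_two_iff.mp ((congrFun h a).symm.trans (spike_apply_eq_two_iff.mpr rfl))

lemma isAntichain_range_spike : IsAntichain (· ≤ ·) (Set.range (spike : ι → ι → ℤ)) := by
  rintro _ ⟨a, rfl⟩ _ ⟨b, rfl⟩ hne hle
  have hab : a ≠ b := fun h => hne (h ▸ rfl)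
  have := hle a
  simp [spike, hab] at this

lemma coe_image_spike [Fintype ι] : ((Finset.univ.image spike : Finset (ι → ℤ)) : Set (ι → ℤ)) =
    Set.range spike := by
  simp

lemma sum_image_spike [Fintype ι] {M : Type*} [AddCommMonoid M] (s : Finset ι) (p : (ι → ℤ) → M) :
    ∑ γ ∈ s.image spike, p γ = ∑ j ∈ s, p (spike j) :=
  Finset.sum_image fun _ _ _ _ h => spike_injective h

lemma image_image_spike_apply [Fintype ι] [Nontrivial ι] (i : ι) :
    (Finset.univ.image spike).image (fun γ => γ i) = ({2, 1} : Finset ℤ) := by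
  obtain ⟨j, hj⟩ := exists_ne i
  ext a
  simp only [Finset.image_image, Finset.mem_image, Finset.mem_univ, true_and,
    Finset.mem_insert, Finset.mem_singleton, Function.comp_apply]
  constructor
  · rintro ⟨l, rfl⟩
    unfold spike; split_ifs <;> simp
  · rintro (rfl | rfl)
    · exact ⟨i, spike_apply_eq_two_iff.mpr rfl⟩
    · exact ⟨j, spike_apply_eq_one_iff.mpr hj.symm⟩

lemma margEnt_image_spike [Fintype ι] [Nontrivial ι] (p : (ι → ℤ) → ℝ) (hp : ∑ j, p (spike j) = 1)
    (i : ι) : margEnt (Finset.univ.image spike) p i = Real.binEntropy (p (spike i)) := by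
  have hmass (a : ℤ) : ∑ γ ∈ (Finset.univ.image spike).filter (fun γ => γ i = a), p γ =
      ∑ j ∈ Finset.univ.filter (fun j => spike j i = a), p (spike j) := by
    rw [Finset.filter_image, sum_image_spike]
  have hmass_two : ∑ j ∈ Finset.univ.filter (fun j : ι => spike j i = 2), p (spike j) =
      p (spike i) := by
    simp only [spike_apply_eq_two_iff, eq_comm (a := i), Finset.filter_eq', Finset.mem_univ,
      if_true, Finset.sum_singleton]
  have hmass_one : ∑ j ∈ Finset.univ.filter (fun j : ι => spike j i = 1), p (spike j) =
      1 - p (spike i) := by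
    simp only [spike_apply_eq_one_iff, ne_comm (a := i), Finset.filter_ne',
      Finset.sum_erase_eq_sub (Finset.mem_univ i), hp]
  rw [margEnt, image_image_spike_apply, Finset.sum_pair (by norm_num), hmass, hmass, hmass_two,
    hmass_one, Real.binEntropy_eq_negMulLog_add_negMulLog_one_sub, Real.negMulLog,
    Real.negMulLog]
  ring

lemma iInf_margEnt_image_spike_le [Fintype ι] [Nontrivial ι] {p : (ι → ℤ) → ℝ}
    (hp0 : ∀ γ, 0 ≤ p γ) (hp : ∑ j, p (spike j) = 1) :
    ⨅ i, margEnt (Finset.univ.image spike) p i ≤ Real.binEntropy (Fintype.card ι : ℝ)⁻¹ := by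
  have hcard : (2 : ℝ) ≤ Fintype.card ι := by exact_mod_cast Fintype.one_lt_card
  have hinv : (Fintype.card ι : ℝ)⁻¹ ≤ 2⁻¹ := inv_anti₀ two_pos hcard
  obtain ⟨i, -, hi⟩ : ∃ i ∈ Finset.univ, p (spike i) ≤ (Fintype.card ι : ℝ)⁻¹ := by
    refine Finset.exists_le_of_sum_le Finset.univ_nonempty ?_
    rw [hp, Finset.sum_const, Finset.card_univ, nsmul_eq_mul,
      mul_inv_cancel₀ (by positivity)]
  calc ⨅ i, margEnt (Finset.univ.image spike) p i
      ≤ margEnt (Finset.univ.image spike) p i := ciInf_le (Set.finite_range _).bddBelow i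
    _ = Real.binEntropy (p (spike i)) := margEnt_image_spike p hp i
    _ ≤ Real.binEntropy (Fintype.card ι : ℝ)⁻¹ :=
      Real.binEntropy_strictMonoOn.monotoneOn ⟨hp0 _, hi.trans hinv⟩
        ⟨by positivity, hinv⟩ hi

lemma HSet_image_spike [Fintype ι] [Nontrivial ι] :
    HSet (Finset.univ.image (spike : ι → ι → ℤ)) = Real.binEntropy (Fintype.card ι : ℝ)⁻¹ := by
  set Δ := Finset.univ.image (spike : ι → ι → ℤ)
  set u : (ι → ℤ) → ℝ := (Δ : Set (ι → ℤ)).indicator fun _ => (Fintype.card ι : ℝ)⁻¹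
  have hu_spike (j : ι) : u (spike j) = (Fintype.card ι : ℝ)⁻¹ :=
    Set.indicator_of_mem (by simp [Δ]) _
  have hu_sum : ∑ j, u (spike j) = 1 := by
    simp only [hu_spike, Finset.sum_const, Finset.card_univ, nsmul_eq_mul]
    exact mul_inv_cancel₀ (by positivity)
  refine IsGreatest.csSup_eq ⟨⟨u, ?_, ?_, ?_, ?_⟩, ?_⟩
  · exact Set.indicator_nonneg fun _ _ => by positivity
  · exact fun γ hγ => Set.mem_of_indicator_ne_zero hγ
  · rwa [sum_image_spike]
  · simp only [Δ, margEnt_image_spike u hu_sum, hu_spike, ciInf_const]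
  · rintro e ⟨p, hp0, -, hp, rfl⟩
    rw [sum_image_spike] at hp
    exact iInf_margEnt_image_spike_le hp0 hp

end Spike

/-- the set `Γ = {γ_1, …, γ_k}` with `γ_j` having `2` in coordinate `j`
and `1` elsewhere is an antichain for the componentwise order, equals its own set of
maximal elements for the standard product order, and has entropy `ξ k`. -/
theorem stmt2 {k : ℕ} (hk : 2 ≤ k) (Γ : Finset (Fin k → ℤ))
    (hΓ : Γ = Finset.univ.image
      (fun j : Fin k => fun i : Fin k => if i = j then (2 : ℤ) else 1)) :
    IsAntichain (· ≤ ·) (Γ : Set (Fin k → ℤ)) ∧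
    maxElems (fun _ : Fin k => (inferInstance : LinearOrder ℤ)) Γ = Γ ∧
    HSet Γ = xi k := by
  replace hΓ : Γ = Finset.univ.image spike := hΓ
  have : Nontrivial (Fin k) := Fin.nontrivial_iff_two_le.mpr hk
  have hanti : IsAntichain (· ≤ ·) (Γ : Set (Fin k → ℤ)) := by
    rw [hΓ, coe_image_spike]
    exact isAntichain_range_spike
  refine ⟨hanti, maxElems_eq_self_of_isAntichain hanti, ?_⟩
  rw [hΓ, HSet_image_spike, Fintype.card_fin, binEntropy_inv_natCast hk]

end SlicePaper
end
end

section
/- Let k ≥ 2 be an integer and Γ ⊆ ℤ^k a finite set such that for every i ∈ {1,…,k} the i-th coordinate projection π_i(Γ) has more than one element. Then there exists a subset Γ̄ ⊆ Γ with |Γ̄| ≤ k such that for every i ∈ {1,…,k} the projection π_i(Γ̄) has more than one element. -/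
open scoped BigOperators
open Classical

noncomputable section

namespace SlicePaper

/-- if every coordinate projection of `Γ` has more than one element, then
there is a subset of size at most `k` with the same property. -/
theorem stmt8 {k : ℕ} (hk : 2 ≤ k) (Γ : Finset (Fin k → ℤ))
    (h : ∀ i : Fin k, 1 < (Γ.image (fun γ => γ i)).card) :
    ∃ Γ' ⊆ Γ, Γ'.card ≤ k ∧ ∀ i : Fin k, 1 < (Γ'.image (fun γ => γ i)).card := by
  classical
  obtain ⟨Γ', hΓ'mem, hmin⟩ := Finset.exists_min_image
    ((Γ.powerset).filter (fun S => ∀ i : Fin k, 1 < (S.image (fun γ => γ i)).card))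
    Finset.card
    ⟨Γ, by simp only [Finset.mem_filter, Finset.mem_powerset]; exact ⟨le_refl _, h⟩⟩
  simp only [Finset.mem_filter, Finset.mem_powerset] at hΓ'mem
  obtain ⟨hsub, hP⟩ := hΓ'mem
  refine ⟨Γ', hsub, ?_, hP⟩
  by_contra hcard
  push_neg at hcard
  have h3 : 3 ≤ Γ'.card := by omega
  have key : ∀ γ : {x // x ∈ Γ'}, ∃ i : Fin k,
      ((Γ'.erase γ.1).image (fun δ => δ i)).card ≤ 1 := by
    rintro ⟨γ, hγ⟩
    by_contra hcon
    push_neg at hcon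
    have hmem : Γ'.erase γ ∈ (Γ.powerset).filter
        (fun S => ∀ i : Fin k, 1 < (S.image (fun γ => γ i)).card) := by
      simp only [Finset.mem_filter, Finset.mem_powerset]
      exact ⟨(Finset.erase_subset _ _).trans hsub, hcon⟩
    have h1 := hmin _ hmem
    have h2 := Finset.card_erase_of_mem hγ
    omega
  choose φ hφ using key
  have hinj : Function.Injective φ := by
    rintro ⟨γ, hγ⟩ ⟨δ, hδ⟩ hEq
    by_contra hne
    have hγδ : γ ≠ δ := by simpa [Subtype.ext_iff] using hne
    obtain ⟨i, hi⟩ : ∃ i, φ ⟨γ, hγ⟩ = i := ⟨_, rfl⟩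
    have hγi : ((Γ'.erase γ).image (fun η => η i)).card ≤ 1 := by
      have := hφ ⟨γ, hγ⟩; rwa [hi] at this
    have hδi : ((Γ'.erase δ).image (fun η => η i)).card ≤ 1 := by
      have := hφ ⟨δ, hδ⟩; rwa [← hEq, hi] at this
    -- find third element
    have hε : ((Γ'.erase γ).erase δ).Nonempty := by
      rw [← Finset.card_pos, Finset.card_erase_of_mem
        (Finset.mem_erase.mpr ⟨hγδ.symm, hδ⟩), Finset.card_erase_of_mem hγ]
      clear hmin hφ hEq hγi hδi
      omega
    obtain ⟨ε, hεmem⟩ := hε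
    have hεδ : ε ≠ δ := (Finset.mem_erase.mp hεmem).1
    have hεγ : ε ≠ γ := (Finset.mem_erase.mp (Finset.mem_erase.mp hεmem).2).1
    have hεΓ' : ε ∈ Γ' := (Finset.mem_erase.mp (Finset.mem_erase.mp hεmem).2).2
    have agreeγ : ∀ η ∈ Γ'.erase γ, η i = ε i := by
      intro η hη
      have := Finset.card_le_one.mp hγi (η i)
        (Finset.mem_image_of_mem _ hη) (ε i)
        (Finset.mem_image_of_mem _ (Finset.mem_erase.mpr ⟨hεγ, hεΓ'⟩))
      exact this
    have hγε : γ i = ε i := by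
      have := Finset.card_le_one.mp hδi (γ i)
        (Finset.mem_image_of_mem _ (Finset.mem_erase.mpr ⟨hγδ, hγ⟩)) (ε i)
        (Finset.mem_image_of_mem _ (Finset.mem_erase.mpr ⟨hεδ, hεΓ'⟩))
      exact this
    have : (Γ'.image (fun η => η i)).card ≤ 1 := by
      apply Finset.card_le_one.mpr
      intro a ha b hb
      simp only [Finset.mem_image] at ha hb
      obtain ⟨η, hη, rfl⟩ := ha
      obtain ⟨θ, hθ, rfl⟩ := hb
      have val : ∀ η ∈ Γ', η i = ε i := by
        intro η hη
        by_cases hc : η = γ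
        · subst hc; exact hγε
        · exact agreeγ η (Finset.mem_erase.mpr ⟨hc, hη⟩)
      rw [val η hη, val θ hθ]
    exact absurd this (hP i).not_ge
  have := Fintype.card_le_of_injective φ hinj
  simp [Fintype.card_coe] at this
  omega


end SlicePaper
end
end

section
/- Let k ≥ 2 be an integer, S a finite set, and p : S → ℝ_{≥0} a probability distribution (∑_{α∈S} p(α) = 1). Suppose there exists ᾱ ∈ S with 1/k ≤ p(ᾱ) ≤ 1/2. Then −∑_{α∈S} p(α)·log p(α) ≥ log(k/(k−1)^{(k−1)/k}). -/
open scoped BigOperators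
open Classical

noncomputable section

namespace SlicePaper

/-- a probability distribution having an atom of probability in
`[1/k, 1/2]` has Shannon entropy at least `ξ k`. -/
theorem stmt10 {k : ℕ} (hk : 2 ≤ k) {α : Type*} (S : Finset α) (p : α → ℝ)
    (hp : ∀ a ∈ S, 0 ≤ p a) (hsum : ∑ a ∈ S, p a = 1)
    (hbar : ∃ a ∈ S, 1 / (k : ℝ) ≤ p a ∧ p a ≤ 1 / 2) :
    xi k ≤ -∑ a ∈ S, p a * Real.log (p a) := by
  obtain ⟨a₀, ha₀, hlo, hhi⟩ := hbar
  have hk1 : (1 : ℝ) ≤ (k : ℝ) - 1 := by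
    have : (2 : ℝ) ≤ (k : ℝ) := by exact_mod_cast hk
    linarith
  have hkpos : (0 : ℝ) < (k : ℝ) := by positivity
  set q := p a₀ with hq
  have hq0 : 0 ≤ q := hp a₀ ha₀
  have h1q : 0 < 1 - q := by linarith
  -- Step 1: xi k = binEntropy (1/k)
  have hxi : xi k = Real.binEntropy (1 / (k : ℝ)) := by
    have hlogrpow : Real.log (((k : ℝ) - 1) ^ (((k : ℝ) - 1) / (k : ℝ)))
        = (((k : ℝ) - 1) / (k : ℝ)) * Real.log ((k : ℝ) - 1) :=
      Real.log_rpow (by linarith) _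
    have hne : (((k : ℝ) - 1) ^ (((k : ℝ) - 1) / (k : ℝ))) ≠ 0 := by
      positivity
    rw [xi, Real.log_div (by positivity) hne, hlogrpow, Real.binEntropy]
    have h1 : (1 : ℝ) - 1 / (k : ℝ) = ((k : ℝ) - 1) / (k : ℝ) := by
      field_simp
    rw [h1, Real.log_inv, Real.log_inv, Real.log_div (by norm_num) (by positivity),
      Real.log_div (by linarith) (by positivity), Real.log_one]
    field_simp
    ring
  rw [hxi]
  -- Step 2: binEntropy (1/k) ≤ binEntropy q
  have hmono : Real.binEntropy (1 / (k : ℝ)) ≤ Real.binEntropy q := by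
    apply Real.binEntropy_strictMonoOn.monotoneOn
    · have h2 : (1 : ℝ) / (k : ℝ) ≤ 1 / 2 :=
        one_div_le_one_div_of_le (by norm_num) (by exact_mod_cast hk)
      exact Set.mem_Icc.mpr ⟨by positivity, by rw [← one_div]; exact h2⟩
    · exact Set.mem_Icc.mpr ⟨hq0, by rw [← one_div]; exact hhi⟩
    · exact hlo
  refine hmono.trans ?_
  -- Step 3: binEntropy q ≤ entropy
  have hbe : Real.binEntropy q = -(q * Real.log q) - (1 - q) * Real.log (1 - q) := by
    rw [Real.binEntropy, Real.log_inv, Real.log_inv]; ring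
  have hsplit : ∑ a ∈ S, p a * Real.log (p a)
      = q * Real.log q + ∑ a ∈ S.erase a₀, p a * Real.log (p a) := by
    rw [← Finset.add_sum_erase _ _ ha₀]
  have hrest_sum : ∑ a ∈ S.erase a₀, p a = 1 - q := by
    have := Finset.add_sum_erase S p ha₀
    rw [hsum] at this; linarith
  have hrest : ∑ a ∈ S.erase a₀, p a * Real.log (p a) ≤ (1 - q) * Real.log (1 - q) := by
    rw [← hrest_sum, Finset.sum_mul]
    apply Finset.sum_le_sum
    intro a ha
    have ha' : a ∈ S := Finset.mem_of_mem_erase ha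
    have hpa : 0 ≤ p a := hp a ha'
    rcases eq_or_lt_of_le hpa with h0 | h0
    · rw [← h0]; simp
    · have hle : p a ≤ ∑ b ∈ S.erase a₀, p b :=
        Finset.single_le_sum (fun b hb => hp b (Finset.mem_of_mem_erase hb)) ha
      exact mul_le_mul_of_nonneg_left (Real.log_le_log h0 hle) hpa
  rw [hbe, hsplit]
  linarith

end SlicePaper
end
end

section
/- Let k ≥ 2 be an integer, Γ ⊆ ℤ^k a finite nonempty set, and P_i = π_i(Γ) for i ∈ {1,…,k}. Then the following are equivalent: (1) for every subset I ⊆ {1,…,k}, every x ∈ ∏_{i∈I} P_i, and every choice of linear orders on ℤ for the coordinates outside I (with product partial order σ), one has H((Γ_I^x)_σ) = 0; (2) Γ = P_1 × ⋯ × P_k. -/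
open scoped BigOperators
open Classical

noncomputable section

namespace SlicePaper

lemma neg_mul_log_le_one {q : ℝ} (h0 : 0 ≤ q) (h1 : q ≤ 1) : -(q * Real.log q) ≤ 1 := by
  rcases eq_or_lt_of_le h0 with h | h
  · simp [← h]
  · have hlog : Real.log (1 / q) ≤ 1 / q - 1 := Real.log_le_sub_one_of_pos (by positivity)
    rw [Real.log_div one_ne_zero (ne_of_gt h), Real.log_one] at hlog
    have : -(q * Real.log q) = q * (0 - Real.log q) := by ring
    rw [this]
    calc q * (0 - Real.log q) ≤ q * (1 / q - 1) := by
          apply mul_le_mul_of_nonneg_left _ h0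
          linarith
      _ = 1 - q := by field_simp
      _ ≤ 1 := by linarith

lemma margEnt_le {ι : Type*} [Fintype ι] (Δ : Finset (ι → ℤ)) (p : (ι → ℤ) → ℝ)
    (hp0 : ∀ γ, 0 ≤ p γ) (hsum : ∑ γ ∈ Δ, p γ = 1) (i : ι) :
    margEnt Δ p i ≤ (Δ.card : ℝ) := by
  unfold margEnt
  rw [← Finset.sum_neg_distrib]
  calc (∑ α ∈ Δ.image (fun γ => γ i),
        -((∑ γ ∈ Δ.filter (fun γ => γ i = α), p γ) *
          Real.log (∑ γ ∈ Δ.filter (fun γ => γ i = α), p γ)))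
      ≤ ∑ α ∈ Δ.image (fun γ => γ i), (1 : ℝ) := by
        apply Finset.sum_le_sum
        intro α _
        apply neg_mul_log_le_one
        · exact Finset.sum_nonneg (fun γ _ => hp0 γ)
        · rw [← hsum]
          exact Finset.sum_le_sum_of_subset_of_nonneg (Finset.filter_subset _ _)
            (fun γ hγ _ => hp0 γ)
    _ = ((Δ.image (fun γ => γ i)).card : ℝ) := by simp
    _ ≤ (Δ.card : ℝ) := by exact_mod_cast Finset.card_image_le

lemma HSet_bddAbove {ι : Type*} [Fintype ι] (Δ : Finset (ι → ℤ)) :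
    BddAbove {e : ℝ | ∃ p : (ι → ℤ) → ℝ, (∀ γ, 0 ≤ p γ) ∧ (∀ γ, p γ ≠ 0 → γ ∈ Δ) ∧
      (∑ γ ∈ Δ, p γ) = 1 ∧ e = ⨅ i, margEnt Δ p i} := by
  refine ⟨(Δ.card : ℝ), ?_⟩
  rintro e ⟨p, hp0, hsupp, hsum, rfl⟩
  rcases isEmpty_or_nonempty ι with hι | hι
  · rw [iInf_of_isEmpty]
    show sInf ∅ ≤ _
    rw [Real.sInf_empty]
    positivity
  · obtain ⟨i₀⟩ := hι
    calc (⨅ i, margEnt Δ p i) ≤ margEnt Δ p i₀ := ciInf_le (Finite.bddBelow_range _) i₀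
      _ ≤ (Δ.card : ℝ) := margEnt_le Δ p hp0 hsum i₀

lemma margEnt_singleton {ι : Type*} [Fintype ι] (t : ι → ℤ) (p : (ι → ℤ) → ℝ)
    (hsum : ∑ γ ∈ ({t} : Finset (ι → ℤ)), p γ = 1) (i : ι) :
    margEnt ({t} : Finset (ι → ℤ)) p i = 0 := by
  have hpt : p t = 1 := by simpa using hsum
  unfold margEnt
  rw [Finset.image_singleton]
  rw [Finset.sum_singleton]
  have : ({t} : Finset (ι → ℤ)).filter (fun γ => γ i = t i) = {t} := by
    ext γ; simp (config := {contextual := true})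
  rw [this, Finset.sum_singleton, hpt]
  simp

lemma HSet_singleton {ι : Type*} [Fintype ι] (t : ι → ℤ) :
    HSet ({t} : Finset (ι → ℤ)) = 0 := by
  have hz : ∀ (p : (ι → ℤ) → ℝ), (∑ γ ∈ ({t} : Finset (ι → ℤ)), p γ) = 1 →
      (⨅ i, margEnt ({t} : Finset (ι → ℤ)) p i) = 0 := by
    intro p hsum
    rcases isEmpty_or_nonempty ι with hι | hι
    · rw [iInf_of_isEmpty]; show sInf ∅ = _; rw [Real.sInf_empty]
    · have : (fun i => margEnt ({t} : Finset (ι → ℤ)) p i) = fun _ => (0 : ℝ) :=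
        funext (fun i => margEnt_singleton t p hsum i)
      rw [show (⨅ i, margEnt ({t} : Finset (ι → ℤ)) p i) = ⨅ i : ι, (0:ℝ) by rw [this]]
      exact ciInf_const
  have hset : {e : ℝ | ∃ p : (ι → ℤ) → ℝ, (∀ γ, 0 ≤ p γ) ∧ (∀ γ, p γ ≠ 0 → γ ∈ ({t} : Finset (ι → ℤ))) ∧
      (∑ γ ∈ ({t} : Finset (ι → ℤ)), p γ) = 1 ∧ e = ⨅ i, margEnt ({t} : Finset (ι → ℤ)) p i} = {0} := by
    apply Set.eq_singleton_iff_unique_mem.2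
    constructor
    · refine ⟨fun γ => if γ = t then 1 else 0, ?_, ?_, ?_, ?_⟩
      · intro γ; dsimp only; split <;> norm_num
      · intro γ h; dsimp only at h; by_cases hγ : γ = t
        · simp [hγ]
        · simp [hγ] at h
      · simp
      · rw [hz _ (by simp)]
    · rintro e ⟨p, hp0, hsupp, hsum, rfl⟩
      exact hz p hsum
  unfold HSet
  rw [hset, csSup_singleton]

lemma HSet_pos {ι : Type*} [Fintype ι] [Nonempty ι] (M : Finset (ι → ℤ)) (γ δ : ι → ℤ)
    (hγ : γ ∈ M) (hδ : δ ∈ M) (hd : ∀ i, γ i ≠ δ i) : Real.log 2 ≤ HSet M := by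
  classical
  set p : (ι → ℤ) → ℝ := fun w => (if w = γ then 2⁻¹ else 0) + (if w = δ then 2⁻¹ else 0) with hp
  have hγδ : γ ≠ δ := fun h => hd (Classical.arbitrary ι) (congrFun h _)
  have hsumF : ∀ F : Finset (ι → ℤ), ∑ w ∈ F, p w =
      (if γ ∈ F then (2:ℝ)⁻¹ else 0) + (if δ ∈ F then (2:ℝ)⁻¹ else 0) := by
    intro F
    rw [hp, Finset.sum_add_distrib, Finset.sum_ite_eq' F γ (fun _ => (2:ℝ)⁻¹),
      Finset.sum_ite_eq' F δ (fun _ => (2:ℝ)⁻¹)]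
  have hmarg : ∀ i, margEnt M p i = Real.log 2 := by
    intro i
    unfold margEnt
    have hterm : ∀ α ∈ M.image (fun w => w i),
        (∑ w ∈ M.filter (fun w => w i = α), p w) *
          Real.log (∑ w ∈ M.filter (fun w => w i = α), p w) =
        (if α = γ i then (2:ℝ)⁻¹ * Real.log 2⁻¹ else 0) +
        (if α = δ i then (2:ℝ)⁻¹ * Real.log 2⁻¹ else 0) := by
      intro α _
      rw [hsumF]
      have hmemγ : γ ∈ M.filter (fun w => w i = α) ↔ α = γ i := by
        simp [hγ, eq_comm]
      have hmemδ : δ ∈ M.filter (fun w => w i = α) ↔ α = δ i := by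
        simp [hδ, eq_comm]
      by_cases h1 : α = γ i <;> by_cases h2 : α = δ i
      · exact (hd i (h1.symm.trans h2)).elim
      · rw [if_pos (hmemγ.2 h1), if_neg (fun hh => h2 (hmemδ.1 hh)), if_pos h1, if_neg h2]
        norm_num
      · rw [if_neg (fun hh => h1 (hmemγ.1 hh)), if_pos (hmemδ.2 h2), if_neg h1, if_pos h2]
        norm_num
      · rw [if_neg (fun hh => h1 (hmemγ.1 hh)), if_neg (fun hh => h2 (hmemδ.1 hh)),
          if_neg h1, if_neg h2]
        norm_num
    rw [Finset.sum_congr rfl hterm, Finset.sum_add_distrib,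
      Finset.sum_ite_eq' _ (γ i) (fun _ => (2:ℝ)⁻¹ * Real.log 2⁻¹),
      Finset.sum_ite_eq' _ (δ i) (fun _ => (2:ℝ)⁻¹ * Real.log 2⁻¹),
      if_pos (Finset.mem_image_of_mem _ hγ), if_pos (Finset.mem_image_of_mem _ hδ)]
    rw [Real.log_inv]
    ring
  have hmem : Real.log 2 ∈ {e : ℝ | ∃ p : (ι → ℤ) → ℝ, (∀ w, 0 ≤ p w) ∧ (∀ w, p w ≠ 0 → w ∈ M) ∧
      (∑ w ∈ M, p w) = 1 ∧ e = ⨅ i, margEnt M p i} := by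
    refine ⟨p, ?_, ?_, ?_, ?_⟩
    · intro w; rw [hp]; dsimp only; split <;> split <;> norm_num
    · intro w h
      rw [hp] at h; dsimp only at h
      by_cases h1 : w = γ
      · exact h1 ▸ hγ
      · by_cases h2 : w = δ
        · exact h2 ▸ hδ
        · simp [h1, h2] at h
    · rw [hsumF, if_pos hγ, if_pos hδ]; norm_num
    · rw [show (fun i => margEnt M p i) = fun _ => Real.log 2 from funext hmarg]
      exact ciInf_const.symm
  exact le_csSup (HSet_bddAbove M) hmem


def tfun (a : ℤ) : ℤ → ℕᵒᵈ := fun x => OrderDual.toDual (if x = a then 0 else Encodable.encode x + 1)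

lemma tfun_inj (a : ℤ) : Function.Injective (tfun a) := by
  intro x y h
  have h' : (if x = a then 0 else Encodable.encode x + 1) = (if y = a then 0 else Encodable.encode y + 1) := congrArg OrderDual.ofDual h
  by_cases hx : x = a <;> by_cases hy : y = a <;> simp [hx, hy] at h'
  · exact hx.trans hy.symm
  · exact h'

def topAt (a : ℤ) : LinearOrder ℤ := LinearOrder.lift' (tfun a) (tfun_inj a)

lemma le_topAt (a z : ℤ) : (topAt a).le z a := by
  show tfun a z ≤ tfun a a
  show OrderDual.ofDual (tfun a a) ≤ OrderDual.ofDual (tfun a z)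
  simp [tfun]

def fmax (L : LinearOrder ℤ) (s : Finset ℤ) (hs : s.Nonempty) : ℤ := @Finset.max' ℤ L s hs
lemma fmax_mem (L : LinearOrder ℤ) (s : Finset ℤ) (hs : s.Nonempty) : fmax L s hs ∈ s :=
  @Finset.max'_mem ℤ L s hs
lemma le_fmax (L : LinearOrder ℤ) (s : Finset ℤ) (hs : s.Nonempty) {x : ℤ} (hx : x ∈ s) :
    L.le x (fmax L s hs) := @Finset.le_max' ℤ L s x hx

lemma lo_antisymm (L : LinearOrder ℤ) {x y : ℤ} (h1 : L.le x y) (h2 : L.le y x) : x = y :=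
  L.le_antisymm x y h1 h2

def slab {ι : Type*} [Fintype ι] (Δ : Finset (ι → ℤ)) (j : ι) (c : ℤ) : Finset (ι → ℤ) :=
  Δ.filter (fun γ => γ j = c)

def IsProd {ι : Type*} [Fintype ι] (Δ : Finset (ι → ℤ)) : Prop :=
  Δ = Fintype.piFinset (fun i => Δ.image (fun γ => γ i))

lemma exists_slab_top {ι : Type*} [Fintype ι] (σ : ι → LinearOrder ℤ) {Δ : Finset (ι → ℤ)}
    {j : ι} {c : ℤ} (hprod : IsProd (slab Δ j c)) (hne : (slab Δ j c).Nonempty) :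
    ∃ t, t ∈ slab Δ j c ∧ t j = c ∧ ∀ w ∈ slab Δ j c, ∀ i, (σ i).le (w i) (t i) := by
  have hA : ∀ i, ((slab Δ j c).image (fun w => w i)).Nonempty := fun i => hne.image _
  refine ⟨fun i => fmax (σ i) _ (hA i), ?_, ?_, ?_⟩
  · rw [IsProd] at hprod
    have hm : (fun i => fmax (σ i) _ (hA i)) ∈
        Fintype.piFinset (fun i => (slab Δ j c).image (fun w => w i)) :=
      Fintype.mem_piFinset.2 fun i => fmax_mem _ _ _
    rw [← hprod] at hm
    exact hm
  · have := fmax_mem (σ j) _ (hA j)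
    obtain ⟨w, hw, hwj⟩ := Finset.mem_image.1 this
    exact (hwj.symm.trans ((Finset.mem_filter.1 hw).2))
  · intro w hw i
    exact le_fmax _ _ _ (Finset.mem_image_of_mem _ hw)

lemma slab_top_maximal {ι : Type*} [Fintype ι] (σ : ι → LinearOrder ℤ) {Δ : Finset (ι → ℤ)}
    {j : ι} {c : ℤ} (hσ : σ j = topAt c) {t : ι → ℤ} (h1 : t ∈ slab Δ j c) (h2 : t j = c)
    (h3 : ∀ w ∈ slab Δ j c, ∀ i, (σ i).le (w i) (t i)) : t ∈ maxElems σ Δ := by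
  rw [maxElems, Finset.mem_filter]
  refine ⟨Finset.filter_subset _ _ h1, ?_⟩
  intro w hw hle
  have hwj : w j = c := by
    have h4 : (σ j).le (t j) (w j) := hle j
    rw [hσ, h2] at h4
    exact lo_antisymm (topAt c) (le_topAt c (w j)) h4
  have hwslab : w ∈ slab Δ j c := Finset.mem_filter.2 ⟨hw, hwj⟩
  funext i
  exact lo_antisymm (σ i) (hle i) (h3 w hwslab i)

lemma maxElems_piFinset {ι : Type*} [Fintype ι] (σ : ι → LinearOrder ℤ) (A : ι → Finset ℤ)
    (hA : ∀ i, (A i).Nonempty) :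
    maxElems σ (Fintype.piFinset A) = {fun i => fmax (σ i) (A i) (hA i)} := by
  have htmem : (fun i => fmax (σ i) (A i) (hA i)) ∈ Fintype.piFinset A :=
    Fintype.mem_piFinset.2 fun i => fmax_mem _ _ _
  ext w
  simp only [maxElems, Finset.mem_filter, Finset.mem_singleton]
  constructor
  · rintro ⟨hw, hmax⟩
    exact hmax _ htmem (fun i => le_fmax _ _ _ (Fintype.mem_piFinset.1 hw i))
  · rintro rfl
    refine ⟨htmem, ?_⟩
    intro w hw hle
    funext i
    exact lo_antisymm (σ i) (hle i) (le_fmax _ _ _ (Fintype.mem_piFinset.1 hw i))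


theorem abstract_main {ι : Type*} [Fintype ι] (Δ : Finset (ι → ℤ)) (hne : Δ.Nonempty)
    (H1 : ∀ (j : ι) (c : ℤ), c ∈ Δ.image (fun γ => γ j) → IsProd (slab Δ j c))
    (H2 : ∀ σ : ι → LinearOrder ℤ, HSet (maxElems σ Δ) = 0) : IsProd Δ := by
  apply Finset.Subset.antisymm
  · intro γ hγ
    rw [Fintype.mem_piFinset]
    exact fun i => Finset.mem_image_of_mem _ hγ
  · intro u hu
    rw [Fintype.mem_piFinset] at hu
    by_contra hu'
    have hslabne : ∀ j, (slab Δ j (u j)).Nonempty := by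
      intro j
      obtain ⟨γ, hγ, hγj⟩ := Finset.mem_image.1 (hu j)
      exact ⟨γ, Finset.mem_filter.2 ⟨hγ, hγj⟩⟩
    have hbad : ∀ j : ι, ∃ i, u i ∉ (slab Δ j (u j)).image (fun w => w i) := by
      intro j
      by_contra hcon
      push_neg at hcon
      have hu2 : u ∈ slab Δ j (u j) := by
        have := H1 j (u j) (hu j)
        rw [IsProd] at this
        rw [this, Fintype.mem_piFinset]
        exact hcon
      exact hu' (Finset.filter_subset _ _ hu2)
    rcases isEmpty_or_nonempty ι with hι | hι
    · obtain ⟨γ, hγ⟩ := hne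
      exact hu' ((funext (fun i => isEmptyElim i) : u = γ) ▸ hγ)
    · have j₁ : ι := Classical.arbitrary ι
      obtain ⟨i₂, hbad2⟩ := hbad j₁
      let σ : ι → LinearOrder ℤ := fun i => topAt (u i)
      obtain ⟨γ, hγslab, hγj, hγtop⟩ := exists_slab_top σ (H1 j₁ (u j₁) (hu j₁)) (hslabne j₁)
      obtain ⟨δ, hδslab, hδj, hδtop⟩ := exists_slab_top σ (H1 i₂ (u i₂) (hu i₂)) (hslabne i₂)
      have hγmax : γ ∈ maxElems σ Δ := slab_top_maximal σ rfl hγslab hγj hγtop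
      have hδmax : δ ∈ maxElems σ Δ := slab_top_maximal σ rfl hδslab hδj hδtop
      have hne2 : γ i₂ ≠ δ i₂ := by
        intro h
        apply hbad2
        rw [← (h.trans hδj)]
        exact Finset.mem_image_of_mem _ hγslab
      have hdiff : ∀ i, γ i ≠ δ i := by
        intro i h
        have hγΔ : γ ∈ Δ := Finset.filter_subset _ _ hγslab
        have hδΔ : δ ∈ Δ := Finset.filter_subset _ _ hδslab
        have hcmem : γ i ∈ Δ.image (fun w => w i) := Finset.mem_image_of_mem _ hγΔ
        have hsne : (slab Δ i (γ i)).Nonempty := ⟨γ, Finset.mem_filter.2 ⟨hγΔ, rfl⟩⟩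
        obtain ⟨μ, hμslab, hμj, hμtop⟩ := exists_slab_top σ (H1 i (γ i) hcmem) hsne
        have hμΔ : μ ∈ Δ := Finset.filter_subset _ _ hμslab
        have hγm := (Finset.mem_filter.1 hγmax).2
        have hδm := (Finset.mem_filter.1 hδmax).2
        have hγμ : γ = μ :=
          hγm μ hμΔ (fun i' => hμtop γ (Finset.mem_filter.2 ⟨hγΔ, rfl⟩) i')
        have hδμ : δ = μ :=
          hδm μ hμΔ (fun i' => hμtop δ (Finset.mem_filter.2 ⟨hδΔ, h.symm⟩) i')
        exact hne2 (congrFun (hγμ.trans hδμ.symm) i₂)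
      have hge := HSet_pos (maxElems σ Δ) γ δ hγmax hδmax hdiff
      rw [H2 σ] at hge
      have hlog : (0:ℝ) < Real.log 2 := Real.log_pos (by norm_num)
      linarith


lemma subset_piFinset {ι : Type*} [Fintype ι] (Δ : Finset (ι → ℤ)) :
    Δ ⊆ Fintype.piFinset (fun i => Δ.image (fun γ => γ i)) :=
  fun γ hγ => Fintype.mem_piFinset.2 fun i => Finset.mem_image_of_mem _ hγ

lemma mem_piFinset' {ι : Type*} [Fintype ι] {A : ι → Finset ℤ} {f : ι → ℤ} :
    f ∈ Fintype.piFinset A ↔ ∀ i, f i ∈ A i := Fintype.mem_piFinset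

lemma sect_hx {k : ℕ} {Γ : Finset (Fin k → ℤ)} {I : Finset (Fin k)} {x : Fin k → ℤ}
    (hne : (sect Γ I x).Nonempty) : ∀ i ∈ I, x i ∈ Γ.image (fun γ => γ i) := by
  obtain ⟨v, hv⟩ := hne
  obtain ⟨γ, hγ, -⟩ := Finset.mem_image.1 hv
  intro i hi
  exact Finset.mem_image.2 ⟨γ, (Finset.mem_filter.1 hγ).1, (Finset.mem_filter.1 hγ).2 i hi⟩

lemma mem_slab_sect_iff {k : ℕ} (Γ : Finset (Fin k → ℤ)) (I : Finset (Fin k)) (x : Fin k → ℤ)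
    (j : {i : Fin k // i ∉ I}) (c : ℤ) (v : {i : Fin k // i ∉ I} → ℤ) :
    v ∈ slab (sect Γ I x) j c ↔ (v j = c ∧
      (fun i : {i : Fin k // i ∉ insert j.1 I} =>
        v ⟨i.1, fun h => i.2 (Finset.mem_insert_of_mem h)⟩)
          ∈ sect Γ (insert j.1 I) (Function.update x j.1 c)) := by
  constructor
  · intro hv
    obtain ⟨hvΔ, hvj⟩ := Finset.mem_filter.1 hv
    obtain ⟨γ, hγ, hres⟩ := Finset.mem_image.1 hvΔ
    refine ⟨hvj, ?_⟩
    apply Finset.mem_image.2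
    refine ⟨γ, ?_, ?_⟩
    · refine Finset.mem_filter.2 ⟨(Finset.mem_filter.1 hγ).1, ?_⟩
      intro i hi
      rcases Finset.mem_insert.1 hi with h | h
      · rw [h, Function.update_self]
        have : γ j.1 = v j := congrFun hres j
        rw [← h] at this
        exact (h ▸ this).trans hvj
      · rw [Function.update_of_ne (fun he : i = j.1 => j.2 (he ▸ h)) _ x]
        exact (Finset.mem_filter.1 hγ).2 i h
    · funext i
      exact congrFun hres ⟨i.1, fun h => i.2 (Finset.mem_insert_of_mem h)⟩
  · rintro ⟨hvj, hv'⟩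
    obtain ⟨γ, hγ, hres'⟩ := Finset.mem_image.1 hv'
    have hγΓ := (Finset.mem_filter.1 hγ).1
    have hagree := (Finset.mem_filter.1 hγ).2
    have hres : (fun i : {i : Fin k // i ∉ I} => γ i.1) = v := by
      funext i
      by_cases hij : i = j
      · subst hij
        have := hagree i.1 (Finset.mem_insert_self _ _)
        rw [Function.update_self] at this
        exact this.trans hvj.symm
      · have hiI' : i.1 ∉ insert j.1 I := by
          intro h
          rcases Finset.mem_insert.1 h with h | h
          · exact hij (Subtype.ext h)
          · exact i.2 h
        exact congrFun hres' ⟨i.1, hiI'⟩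
    refine Finset.mem_filter.2 ⟨Finset.mem_image.2 ⟨γ, Finset.mem_filter.2 ⟨hγΓ, ?_⟩, hres⟩, hvj⟩
    intro i hi
    have := hagree i (Finset.mem_insert_of_mem hi)
    rwa [Function.update_of_ne (fun he : i = j.1 => j.2 (he ▸ hi)) _ x] at this

lemma slab_sect {k : ℕ} (Γ : Finset (Fin k → ℤ)) (I : Finset (Fin k)) (x : Fin k → ℤ)
    (j : {i : Fin k // i ∉ I}) (c : ℤ)
    (hprod : IsProd (sect Γ (insert j.1 I) (Function.update x j.1 c))) :
    IsProd (slab (sect Γ I x) j c) := by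
  apply Finset.Subset.antisymm (subset_piFinset _)
  intro u hu
  rw [mem_piFinset'] at hu
  have huj : u j = c := by
    obtain ⟨v, hv, hvj⟩ := Finset.mem_image.1 (hu j)
    exact hvj ▸ (Finset.mem_filter.1 hv).2
  have hru : (fun i : {i : Fin k // i ∉ insert j.1 I} =>
      u ⟨i.1, fun h => i.2 (Finset.mem_insert_of_mem h)⟩)
        ∈ sect Γ (insert j.1 I) (Function.update x j.1 c) := by
    rw [IsProd] at hprod
    have hm : ∀ i' : {i : Fin k // i ∉ insert j.1 I},
        u ⟨i'.1, fun h => i'.2 (Finset.mem_insert_of_mem h)⟩ ∈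
          (sect Γ (insert j.1 I) (Function.update x j.1 c)).image (fun w => w i') := by
      intro i'
      obtain ⟨v, hv, hvi⟩ := Finset.mem_image.1 (hu ⟨i'.1, fun h => i'.2 (Finset.mem_insert_of_mem h)⟩)
      have hrv := ((mem_slab_sect_iff Γ I x j c v).1 hv).2
      exact Finset.mem_image.2 ⟨_, hrv, hvi⟩
    rw [hprod, mem_piFinset']
    exact hm
  exact (mem_slab_sect_iff Γ I x j c u).2 ⟨huj, hru⟩

theorem sect_isProd {k : ℕ} (Γ : Finset (Fin k → ℤ))
    (Hyp : ∀ I : Finset (Fin k), ∀ x : Fin k → ℤ,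
        (∀ i ∈ I, x i ∈ Γ.image (fun γ => γ i)) →
        ∀ σ : {i : Fin k // i ∉ I} → LinearOrder ℤ,
          HSet (maxElems σ (sect Γ I x)) = 0) :
    ∀ (n : ℕ) (I : Finset (Fin k)) (x : Fin k → ℤ), (Finset.univ \ I).card ≤ n →
      (sect Γ I x).Nonempty → IsProd (sect Γ I x) := by
  intro n
  induction n with
  | zero =>
    intro I x hcard hne
    apply abstract_main _ hne
    · intro j c hc
      exfalso
      have hemp : (Finset.univ \ I) = ∅ := Finset.card_eq_zero.1 (Nat.le_zero.1 hcard)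
      have hj : j.1 ∈ Finset.univ \ I := Finset.mem_sdiff.2 ⟨Finset.mem_univ j.1, j.2⟩
      rw [hemp] at hj
      exact Finset.notMem_empty _ hj
    · exact Hyp I x (sect_hx hne)
  | succ n ih =>
    intro I x hcard hne
    apply abstract_main _ hne
    · intro j c hc
      apply slab_sect
      apply ih (insert j.1 I) (Function.update x j.1 c)
      · have hj : j.1 ∈ Finset.univ \ I := Finset.mem_sdiff.2 ⟨Finset.mem_univ j.1, j.2⟩
        rw [Finset.sdiff_insert]
        rw [Finset.card_erase_of_mem hj]
        omega
      · obtain ⟨v, hv, hvj⟩ := Finset.mem_image.1 hc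
        have hvslab : v ∈ slab (sect Γ I x) j c := Finset.mem_filter.2 ⟨hv, hvj⟩
        exact ⟨_, ((mem_slab_sect_iff Γ I x j c v).1 hvslab).2⟩
    · exact Hyp I x (sect_hx hne)


/-- Lemma `ProdCartesiano`: all sections of `Γ` have zero-entropy sets of
maximal elements for every ordering iff `Γ` is the cartesian product of its projections. -/
theorem stmt12 {k : ℕ} (hk : 2 ≤ k) (Γ : Finset (Fin k → ℤ)) (hne : Γ.Nonempty) :
    ((∀ I : Finset (Fin k), ∀ x : Fin k → ℤ,
        (∀ i ∈ I, x i ∈ Γ.image (fun γ => γ i)) →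
        ∀ σ : {i : Fin k // i ∉ I} → LinearOrder ℤ,
          HSet (maxElems σ (sect Γ I x)) = 0) ↔
      Γ = Fintype.piFinset (fun i => Γ.image (fun γ => γ i))) := by
  constructor
  · intro Hyp
    have hsect_ne : (sect Γ (∅ : Finset (Fin k)) (fun _ => 0)).Nonempty := by
      obtain ⟨γ, hγ⟩ := hne
      exact ⟨_, Finset.mem_image.2 ⟨γ, Finset.mem_filter.2
        ⟨hγ, fun i hi => absurd hi (Finset.notMem_empty i)⟩, rfl⟩⟩
    have h0 : IsProd (sect Γ (∅ : Finset (Fin k)) (fun _ => 0)) :=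
      sect_isProd Γ Hyp _ ∅ (fun _ => 0) le_rfl hsect_ne
    apply Finset.Subset.antisymm
    · intro γ hγ
      rw [Fintype.mem_piFinset]
      exact fun i => Finset.mem_image_of_mem _ hγ
    · intro u hu
      rw [Fintype.mem_piFinset] at hu
      have hru : (fun i : {i : Fin k // i ∉ (∅ : Finset (Fin k))} => u i.1)
          ∈ sect Γ (∅ : Finset (Fin k)) (fun _ => 0) := by
        rw [IsProd] at h0
        rw [h0, mem_piFinset']
        intro i
        obtain ⟨γ, hγ, hγi⟩ := Finset.mem_image.1 (hu i.1)
        refine Finset.mem_image.2 ⟨fun i' : {i : Fin k // i ∉ (∅ : Finset (Fin k))} => γ i'.1,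
          ?_, hγi⟩
        exact Finset.mem_image.2 ⟨γ, Finset.mem_filter.2
          ⟨hγ, fun i' hi' => absurd hi' (Finset.notMem_empty i')⟩, rfl⟩
      obtain ⟨γ, hγf, hres⟩ := Finset.mem_image.1 hru
      have huγ : u = γ := by
        funext i
        exact (congrFun hres ⟨i, Finset.notMem_empty i⟩ : γ i = u i).symm
      exact huγ ▸ (Finset.mem_filter.1 hγf).1
  · intro hΓ I x hx σ
    have hP : ∀ i : Fin k, (Γ.image (fun γ => γ i)).Nonempty := fun i => hne.image _
    have hsect : sect Γ I x =
        @Fintype.piFinset {i : Fin k // i ∉ I} (fun a b => Classical.propDecidable (a = b)) _ _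
          (fun i : {i : Fin k // i ∉ I} => Γ.image (fun γ => γ i.1)) := by
      apply Finset.Subset.antisymm
      · intro v hv
        obtain ⟨γ, hγ, hres⟩ := Finset.mem_image.1 hv
        rw [mem_piFinset']
        intro i
        rw [← (congrFun hres i : γ i.1 = v i)]
        exact Finset.mem_image_of_mem _ (Finset.mem_filter.1 hγ).1
      · intro v hv
        rw [mem_piFinset'] at hv
        have hγΓ : (fun i : Fin k => if h : i ∈ I then x i else v ⟨i, h⟩) ∈ Γ := by
          rw [hΓ, Fintype.mem_piFinset]
          intro i
          by_cases h : i ∈ I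
          · rw [dif_pos h]; exact hx i h
          · rw [dif_neg h]; exact hv ⟨i, h⟩
        refine Finset.mem_image.2 ⟨_, Finset.mem_filter.2 ⟨hγΓ, fun i hi => dif_pos hi⟩, ?_⟩
        funext i
        exact dif_neg i.2
    rw [hsect, maxElems_piFinset σ _ (fun i => hP i.1), HSet_singleton]

end SlicePaper
end
end
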